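/- With K, S as above and L = [K*, SK*], a pair (f,g) ∈ ℂ^{V₀} ⊕ ℂ^{V₀} satisfies K*f + SK*g = 0 if and only if Df + Tg = 0 and Tf + Dg = 0, where D = KK* and T = KSK*; equivalently ker L = ker(I − E_G²) where E_G = [[0,−I],[2D−I,2T]]. -/

import Mathlib

open Matrix

variable {V : Type*} [Fintype V] [DecidableEq V]

/-- The symmetric arc set of a simple graph: ordered pairs of adjacent vertices. -/
abbrev SimpleGraph.Arc (G : SimpleGraph V) [DecidableRel G.Adj] :=
  {p : V × V // G.Adj p.1 p.2}

/-- The weighted terminal-incidence matrix `K`, `K_{u,a} = 1/√(d̃ u)` if `t(a) = u`. -/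
noncomputable def Kmat (G : SimpleGraph V) [DecidableRel G.Adj] (dt : V → ℕ) :
    Matrix V G.Arc ℝ :=
  fun u a => if a.1.2 = u then 1 / Real.sqrt (dt u) else 0

/-- The arc-reversal matrix `S`, `(S ψ)(a) = ψ(ā)`. -/
def Smat (G : SimpleGraph V) [DecidableRel G.Adj] : Matrix G.Arc G.Arc ℝ :=
  fun a b => if b.1 = (a.1.2, a.1.1) then 1 else 0

/-- The diagonal matrix `D` with entries `d(u)/d̃(u)`. -/
noncomputable def Dmat (G : SimpleGraph V) [DecidableRel G.Adj] (dt : V → ℕ) :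
    Matrix V V ℝ :=
  Matrix.diagonal fun u => (G.degree u : ℝ) / (dt u)

/-- The Dirichlet random-walk matrix `T`, `T_{u,v} = 1/√(d̃(u) d̃(v))` for `u ~ v`. -/
noncomputable def Tmat (G : SimpleGraph V) [DecidableRel G.Adj] (dt : V → ℕ) :
    Matrix V V ℝ :=
  fun u v => if G.Adj u v then 1 / Real.sqrt ((dt u : ℝ) * (dt v : ℝ)) else 0

/-!
Both `D = K Kᵀ` and `T = K S Kᵀ` hold exactly, and `S` is a symmetric involution. So for
`h = Kᵀ f + S Kᵀ g` one has `K h = D f + T g` and `K S h = T f + D g`; conversely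
`h ⬝ h = f ⬝ K h + g ⬝ K S h`, so both vanishing forces `h = 0`. The block matrix
`1 - E_G²` sends `(f, g)` to `(2 (D f + T g), 2 (T f + D g) - 4 T (D f + T g))`.
-/

theorem Matrix.transpose_mulVec_add_mulVec_eq_zero_iff {R : Type*} [CommRing R] [LinearOrder R]
    [IsStrictOrderedRing R] {m n : Type*} [Fintype m] [DecidableEq m] [Fintype n]
    (K : Matrix n m R) {S : Matrix m m R} (hS : S.IsSymm) (hS2 : S * S = 1) (f g : n → R) :
    Kᵀ *ᵥ f + (S * Kᵀ) *ᵥ g = 0 ↔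
      (K * Kᵀ) *ᵥ f + (K * S * Kᵀ) *ᵥ g = 0 ∧ (K * S * Kᵀ) *ᵥ f + (K * Kᵀ) *ᵥ g = 0 := by
  set h := Kᵀ *ᵥ f + (S * Kᵀ) *ᵥ g
  have hK : K *ᵥ h = (K * Kᵀ) *ᵥ f + (K * S * Kᵀ) *ᵥ g := by
    simp only [h, mulVec_add, mulVec_mulVec, Matrix.mul_assoc]
  have hKS : (K * S) *ᵥ h = (K * S * Kᵀ) *ᵥ f + (K * Kᵀ) *ᵥ g := by
    simp only [h, mulVec_add, mulVec_mulVec, Matrix.mul_assoc, ← Matrix.mul_assoc S, hS2,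
      Matrix.one_mul]
  rw [← hK, ← hKS]
  refine ⟨fun h0 => by simp [h0], fun ⟨h1, h2⟩ => dotProduct_self_eq_zero.1 ?_⟩
  calc h ⬝ᵥ h = f ⬝ᵥ K *ᵥ h + g ⬝ᵥ (K * S) *ᵥ h := by
        rw [dotProduct_mulVec, dotProduct_mulVec, ← mulVec_transpose, ← mulVec_transpose,
          transpose_mul, hS.eq, ← add_dotProduct]
    _ = 0 := by rw [h1, h2]; simp

theorem Matrix.fromBlocks_mulVec_sumElim {R : Type*} [NonUnitalNonAssocSemiring R]
    {l m n o : Type*} [Fintype l] [Fintype m] (A : Matrix n l R) (B : Matrix n m R)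
    (C : Matrix o l R) (D : Matrix o m R) (f : l → R) (g : m → R) :
    fromBlocks A B C D *ᵥ Sum.elim f g = Sum.elim (A *ᵥ f + B *ᵥ g) (C *ᵥ f + D *ᵥ g) :=
  fromBlocks_mulVec A B C D _

theorem Matrix.one_sub_mul_self_mulVec_sumElim_eq_zero_iff {R : Type*} [Field R]
    [NeZero (2 : R)] {n : Type*} [Fintype n] [DecidableEq n] (D T : Matrix n n R)
    (f g : n → R) :
    ((1 : Matrix (n ⊕ n) (n ⊕ n) R) - fromBlocks 0 (-1) ((2 : R) • D - 1) ((2 : R) • T) *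
        fromBlocks 0 (-1) ((2 : R) • D - 1) ((2 : R) • T)) *ᵥ Sum.elim f g = 0 ↔
      D *ᵥ f + T *ᵥ g = 0 ∧ T *ᵥ f + D *ᵥ g = 0 := by
  have hE : ((1 : Matrix (n ⊕ n) (n ⊕ n) R) - fromBlocks 0 (-1) ((2 : R) • D - 1) ((2 : R) • T) *
        fromBlocks 0 (-1) ((2 : R) • D - 1) ((2 : R) • T)) *ᵥ Sum.elim f g =
      Sum.elim ((2 : R) • (D *ᵥ f + T *ᵥ g))
        ((2 : R) • (T *ᵥ f + D *ᵥ g) - (4 : R) • T *ᵥ (D *ᵥ f + T *ᵥ g)) := by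
    rw [sub_mulVec, one_mulVec, ← mulVec_mulVec, fromBlocks_mulVec_sumElim,
      fromBlocks_mulVec_sumElim, ← Sum.elim_sub_sub]
    congr 1 <;>
    · simp only [sub_mulVec, smul_mulVec, mulVec_smul, neg_mulVec, one_mulVec, zero_mulVec,
        mulVec_add, mulVec_sub, mulVec_neg, mulVec_zero]
      module
  rw [hE, ← Sum.elim_zero_zero, Sum.elim_eq_iff]
  constructor
  · rintro ⟨h1, h2⟩
    have hDT := (smul_eq_zero.mp h1).resolve_left two_ne_zero
    rw [hDT, mulVec_zero, smul_zero, sub_zero] at h2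
    exact ⟨hDT, (smul_eq_zero.mp h2).resolve_left two_ne_zero⟩
  · rintro ⟨h1, h2⟩
    simp [h1, h2]

namespace SimpleGraph

omit [DecidableEq V] in
theorem sum_arc (G : SimpleGraph V) [DecidableRel G.Adj] {M : Type*} [AddCommMonoid M]
    (F : V → V → M) :
    ∑ a : G.Arc, F a.1.1 a.1.2 = ∑ x, ∑ y, if G.Adj x y then F x y else 0 := by
  rw [← Fintype.sum_prod_type', ← Finset.sum_filter]
  exact (Finset.sum_subtype _ (fun p => by simp) fun p : V × V => F p.1 p.2).symm

def Arc.reverse {G : SimpleGraph V} [DecidableRel G.Adj] (a : G.Arc) : G.Arc :=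
  ⟨(a.1.2, a.1.1), a.2.symm⟩

end SimpleGraph

open SimpleGraph

section GraphMatrices

variable (G : SimpleGraph V) [DecidableRel G.Adj] (dt : V → ℕ)

omit [Fintype V] in
theorem Smat_apply (a b : G.Arc) : Smat G a b = if b = a.reverse then 1 else 0 := by
  simp only [Smat, Arc.reverse, Subtype.ext_iff]

theorem Smat_mul_apply {n : Type*} (M : Matrix G.Arc n ℝ) (a : G.Arc) (j : n) :
    (Smat G * M) a j = M a.reverse j := by
  simp [Matrix.mul_apply, Smat_apply]

omit [Fintype V] in
theorem Smat_isSymm : (Smat G).IsSymm := by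
  ext a b
  simp only [transpose_apply, Smat_apply, Arc.reverse, Subtype.ext_iff]
  grind

theorem Smat_mul_self : Smat G * Smat G = 1 := by
  ext a b
  rw [Smat_mul_apply, Smat_apply, one_apply]
  simp [Arc.reverse, Subtype.ext_iff, eq_comm]

theorem Kmat_mul_transpose : Kmat G dt * (Kmat G dt)ᵀ = Dmat G dt := by
  ext u v
  simp only [Matrix.mul_apply, transpose_apply, Kmat, Dmat, diagonal_apply]
  rw [sum_arc G (fun x y => (if y = u then 1 / √(dt u) else 0) * if y = v then 1 / √(dt v) else 0)]
  by_cases huv : u = v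
  · subst huv
    have hsq : 1 / √(dt u : ℝ) * (1 / √(dt u)) = 1 / dt u := by
      rw [one_div_mul_one_div, Real.mul_self_sqrt (Nat.cast_nonneg _)]
    simp only [mul_ite, ite_mul, mul_zero, zero_mul, hsq, if_true]
    simp [Finset.sum_ite, ← card_neighborFinset_eq_degree, neighborFinset_eq_filter, G.adj_comm,
      div_eq_mul_inv]
  · refine (Finset.sum_eq_zero fun x _ => Finset.sum_eq_zero fun y _ => ?_).trans (if_neg huv).symm
    grind

theorem Kmat_mul_Smat_mul_transpose : Kmat G dt * Smat G * (Kmat G dt)ᵀ = Tmat G dt := by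
  ext u v
  simp only [Matrix.mul_assoc, Matrix.mul_apply (M := Kmat G dt), Smat_mul_apply, transpose_apply,
    Kmat, Arc.reverse, Tmat]
  rw [sum_arc G (fun x y => (if y = u then 1 / √(dt u) else 0) * if x = v then 1 / √(dt v) else 0),
    Fintype.sum_eq_single v (by simp_all), Fintype.sum_eq_single u (by simp_all)]
  simp [G.adj_comm, Real.sqrt_mul (Nat.cast_nonneg _), mul_comm]

end GraphMatrices

theorem ker_L_characterization_general (G : SimpleGraph V) [DecidableRel G.Adj] (dt : V → ℕ) :
    (∀ f g : V → ℝ,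
      (Kmat G dt).transpose.mulVec f + (Smat G * (Kmat G dt).transpose).mulVec g = 0 ↔
        (Dmat G dt).mulVec f + (Tmat G dt).mulVec g = 0 ∧
        (Tmat G dt).mulVec f + (Dmat G dt).mulVec g = 0) ∧
    LinearMap.ker (Matrix.mulVecLin
        (Matrix.fromCols (Kmat G dt).transpose (Smat G * (Kmat G dt).transpose)))
      = LinearMap.ker (Matrix.mulVecLin
          ((1 : Matrix (V ⊕ V) (V ⊕ V) ℝ) - Matrix.fromBlocks 0 (-1) ((2 : ℝ) • Dmat G dt - 1) ((2 : ℝ) • Tmat G dt) *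
            Matrix.fromBlocks 0 (-1) ((2 : ℝ) • Dmat G dt - 1) ((2 : ℝ) • Tmat G dt))) := by
  have hker (f g : V → ℝ) := by
    simpa only [Kmat_mul_transpose, Kmat_mul_Smat_mul_transpose] using
      transpose_mulVec_add_mulVec_eq_zero_iff (Kmat G dt) (Smat_isSymm G) (Smat_mul_self G) f g
  refine ⟨hker, ?_⟩
  ext x
  rw [LinearMap.mem_ker, LinearMap.mem_ker, mulVecLin_apply, mulVecLin_apply,
    ← Sum.elim_comp_inl_inr x, fromCols_mulVec_sumElim,
    one_sub_mul_self_mulVec_sumElim_eq_zero_iff, hker]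

/-- `Kᵀ f + S Kᵀ g = 0` iff `D f + T g = 0` and `T f + D g = 0`; equivalently
`ker L = ker (1 − E_G²)` where `L = [Kᵀ, SKᵀ]` and `E_G = [[0,−1],[2D−1,2T]]`. -/
theorem ker_L_characterization (G : SimpleGraph V) [DecidableRel G.Adj] (dt : V → ℕ)
    (hconn : G.Connected) (hle : ∀ u, G.degree u ≤ dt u) (hbd : ∃ u, G.degree u < dt u) :
    (∀ f g : V → ℝ,
      (Kmat G dt).transpose.mulVec f + (Smat G * (Kmat G dt).transpose).mulVec g = 0 ↔
        (Dmat G dt).mulVec f + (Tmat G dt).mulVec g = 0 ∧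
        (Tmat G dt).mulVec f + (Dmat G dt).mulVec g = 0) ∧
    LinearMap.ker (Matrix.mulVecLin
        (Matrix.fromCols (Kmat G dt).transpose (Smat G * (Kmat G dt).transpose)))
      = LinearMap.ker (Matrix.mulVecLin
          ((1 : Matrix (V ⊕ V) (V ⊕ V) ℝ) - Matrix.fromBlocks 0 (-1) ((2 : ℝ) • Dmat G dt - 1) ((2 : ℝ) • Tmat G dt) *
            Matrix.fromBlocks 0 (-1) ((2 : ℝ) • Dmat G dt - 1) ((2 : ℝ) • Tmat G dt))) :=
  ker_L_characterization_general G dt
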